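/- Let 𝕜 be a commutative ring, k ≥ 1, and R = 𝕜[x_1,…,x_k]/(x_1x_2⋯x_k). For any two disjoint nonempty subsets I, J ⊆ {1,…,k}, the sequence of R-modules 0 → R/(x_J) → R/(x_{I∪J}) → R/(x_I) → 0 is exact, where the first map is multiplication by x_I (well defined since x_I·(x_J) ⊆ (x_{I∪J})) and the second map is the canonical projection (well defined since (x_{I∪J}) ⊆ (x_I)). -/

import Mathlib

open MvPolynomial

/-- The ring `R = 𝕜[x₁,…,x_k]/(x₁x₂⋯x_k)`, with variables indexed by `Fin k`. -/
abbrev NodalRing (𝕜 : Type*) [CommRing 𝕜] (k : ℕ) : Type _ :=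
  MvPolynomial (Fin k) 𝕜 ⧸
    Ideal.span {∏ i : Fin k, (X i : MvPolynomial (Fin k) 𝕜)}

/-- `x_I`: the image in `R` of the monomial `∏_{i ∈ I} x_i` (with `x_∅ = 1`). -/
noncomputable def xgen (𝕜 : Type*) [CommRing 𝕜] (k : ℕ) (I : Finset (Fin k)) :
    NodalRing 𝕜 k :=
  Ideal.Quotient.mk _ (∏ i ∈ I, X i)

/-! For `a, b` in a commutative ring, `0 → R/(b) → R/(ab) → R/(a) → 0` (multiplication by `a`,
then projection) is exact as soon as `a s ∈ (ab)` forces `s ∈ (b)`. For `a = x_I`, `b = x_J` this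
holds in `𝕜[x]/(x₁⋯x_k)`: lifting `x_I s ≡ x_I x_J t` to the polynomial ring and cancelling the
non-zero-divisor `x_I` leaves `s ≡ x_J t` modulo `x₁⋯x_k / x_I`, a multiple of `x_J` because
`I` and `J` are disjoint. -/

namespace Ideal

variable {R : Type*} [CommRing R] (a b : R)

lemma span_singleton_le_comap_lsmul :
    span {b} ≤ Submodule.comap (LinearMap.lsmul R R a) (span {a * b}) := by
  rw [span_le, Set.singleton_subset_iff]
  exact mem_span_singleton_self (a * b)

lemma span_singleton_mul_le_span_singleton : span {a * b} ≤ span {a} :=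
  span_singleton_le_span_singleton.mpr (dvd_mul_right a b)

noncomputable def mulQuotient : (R ⧸ span {b}) →ₗ[R] R ⧸ span {a * b} :=
  Submodule.mapQ _ _ (LinearMap.lsmul R R a) (span_singleton_le_comap_lsmul a b)

lemma mulQuotient_mk (s : R) :
    mulQuotient a b (Submodule.Quotient.mk s) = Submodule.Quotient.mk (a * s) :=
  rfl

lemma range_mulQuotient_eq_ker_factor :
    LinearMap.range (mulQuotient a b) =
      LinearMap.ker (Submodule.factor (span_singleton_mul_le_span_singleton a b)) := by
  apply le_antisymm
  · rintro _ ⟨y, rfl⟩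
    obtain ⟨t, rfl⟩ := Submodule.Quotient.mk_surjective _ y
    exact (Submodule.Quotient.mk_eq_zero _).mpr (mem_span_singleton.mpr (dvd_mul_right a t))
  · intro x hx
    obtain ⟨s, rfl⟩ := Submodule.Quotient.mk_surjective _ x
    obtain ⟨t, rfl⟩ := mem_span_singleton.mp ((Submodule.Quotient.mk_eq_zero _).mp hx)
    exact ⟨Submodule.Quotient.mk t, rfl⟩

lemma mulQuotient_injective (h : ∀ s, a * s ∈ span {a * b} → s ∈ span {b}) :
    Function.Injective (mulQuotient a b) := by
  rw [injective_iff_map_eq_zero]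
  intro x hx
  obtain ⟨s, rfl⟩ := Submodule.Quotient.mk_surjective _ x
  rw [mulQuotient_mk, Submodule.Quotient.mk_eq_zero] at hx
  exact (Submodule.Quotient.mk_eq_zero _).mpr (h s hx)

lemma Quotient.mem_span_singleton_of_mul_mem {m p q : R} (hp : IsLeftRegular p)
    (hpq : p * q ∣ m) {s : R ⧸ span {m}}
    (h : mk _ p * s ∈ span {mk _ p * mk _ q}) : s ∈ span {mk (span {m}) q} := by
  obtain ⟨s, rfl⟩ := Quotient.mk_surjective s
  obtain ⟨t, ht⟩ := mem_span_singleton.mp h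
  obtain ⟨t, rfl⟩ := Quotient.mk_surjective t
  obtain ⟨v, hv⟩ : m ∣ p * s - p * q * t :=
    mem_span_singleton.mp (Quotient.eq.mp (by simpa only [map_mul] using ht))
  obtain ⟨w, rfl⟩ := hpq
  have hs : s = q * (t + w * v) := hp (by linear_combination hv)
  rw [hs, map_mul]
  exact mem_span_singleton.mpr (dvd_mul_right _ _)

end Ideal

section NodalRing

variable {𝕜 : Type*} [CommRing 𝕜] {k : ℕ}

lemma xgen_union {I J : Finset (Fin k)} (hIJ : Disjoint I J) :
    xgen 𝕜 k (I ∪ J) = xgen 𝕜 k I * xgen 𝕜 k J := by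
  simp only [xgen, ← map_mul, Finset.prod_union hIJ]

lemma mem_span_xgen_of_xgen_mul_mem {I J : Finset (Fin k)} (hIJ : Disjoint I J)
    (s : NodalRing 𝕜 k) (h : xgen 𝕜 k I * s ∈ Ideal.span {xgen 𝕜 k I * xgen 𝕜 k J}) :
    s ∈ Ideal.span {xgen 𝕜 k J} := by
  have hdvd : (∏ i ∈ I, X i) * ∏ i ∈ J, X i ∣ ∏ i : Fin k, (X i : MvPolynomial (Fin k) 𝕜) := by
    rw [← Finset.prod_union hIJ]
    exact Finset.prod_dvd_prod_of_subset _ _ _ (Finset.subset_univ _)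
  exact Ideal.Quotient.mem_span_singleton_of_mul_mem (isRegular_prod_X I).left hdvd h

end NodalRing

theorem stmt_9 (𝕜 : Type*) [CommRing 𝕜] (k : ℕ)
    (I J : Finset (Fin k)) (hdisj : Disjoint I J) :
    ∃ (f : (NodalRing 𝕜 k ⧸ Ideal.span {xgen 𝕜 k J}) →ₗ[NodalRing 𝕜 k]
          (NodalRing 𝕜 k ⧸ Ideal.span {xgen 𝕜 k (I ∪ J)}))
      (g : (NodalRing 𝕜 k ⧸ Ideal.span {xgen 𝕜 k (I ∪ J)}) →ₗ[NodalRing 𝕜 k]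
          (NodalRing 𝕜 k ⧸ Ideal.span {xgen 𝕜 k I})),
      (∀ s : NodalRing 𝕜 k,
        f (Submodule.Quotient.mk s) = Submodule.Quotient.mk (xgen 𝕜 k I * s)) ∧
      (∀ s : NodalRing 𝕜 k,
        g (Submodule.Quotient.mk s) = Submodule.Quotient.mk s) ∧
      Function.Injective f ∧
      Function.Surjective g ∧
      LinearMap.range f = LinearMap.ker g := by
  rw [xgen_union hdisj]
  exact ⟨Ideal.mulQuotient _ _, Submodule.factor (Ideal.span_singleton_mul_le_span_singleton _ _),
    Ideal.mulQuotient_mk _ _, fun _ => rfl,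
    Ideal.mulQuotient_injective _ _ (mem_span_xgen_of_xgen_mul_mem hdisj),
    Submodule.factor_surjective _, Ideal.range_mulQuotient_eq_ker_factor _ _⟩
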